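/- The sequence f(2p+1) for p ≥ 0 is convex: f(2p+3) + f(2p−1) ≥ 2·f(2p+1) for all p ≥ 1. -/

import Mathlib

/-- The Laplace–Pólya values, via Laplace's explicit finite-sum formula. -/
noncomputable def J (n : ℕ) (r : ℝ) : ℝ :=
  (1 / (2 ^ (n - 1) * (Nat.factorial (n - 1)))) *
    ∑ i ∈ Finset.Icc (0 : ℤ) ⌊((n : ℝ) + r) / 2⌋,
      (-1 : ℝ) ^ i * (n.choose i.toNat) * ((n : ℝ) + r - 2 * (i : ℝ)) ^ (n - 1)

/-- `f(m) = J_{m+1}(1)` for even `m` and `J_{m+1}(0)` for odd `m`. -/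
noncomputable def f (m : ℕ) : ℝ := if Even m then J (m + 1) 1 else J (m + 1) 0

open MeasureTheory intervalIntegral Set
open scoped Convolution

noncomputable def g (n : ℕ) (r : ℝ) : ℝ :=
  (1 / (2 ^ (n - 1) * (Nat.factorial (n - 1)))) *
    ∑ i ∈ Finset.range (n + 1),
      (-1 : ℝ) ^ i * (n.choose i) * (max ((n : ℝ) + r - 2 * i) 0) ^ (n - 1)

lemma hasDerivAt_maxpow (k : ℕ) (hk : 1 ≤ k) (x : ℝ) :
    HasDerivAt (fun y : ℝ => (max y 0) ^ (k + 1)) ((k + 1) * (max x 0) ^ k) x := by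
  have hk0 : k ≠ 0 := by omega
  rcases lt_trichotomy x 0 with hx | hx | hx
  · have h : (fun y : ℝ => (max y 0) ^ (k+1)) =ᶠ[nhds x] fun _ => 0 := by
      filter_upwards [eventually_lt_nhds hx] with y hy
      rw [max_eq_right hy.le, zero_pow (Nat.succ_ne_zero k)]
    have h0 : HasDerivAt (fun _ : ℝ => (0:ℝ)) 0 x := hasDerivAt_const x 0
    have := h0.congr_of_eventuallyEq h
    simpa [max_eq_right hx.le, zero_pow hk0] using this
  · subst hx
    rw [hasDerivAt_iff_isLittleO]
    rw [Asymptotics.isLittleO_iff]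
    intro c hc
    filter_upwards [Metric.ball_mem_nhds (0:ℝ) (by positivity : (0:ℝ) < min c 1)] with y hy
    rw [mem_ball_zero_iff, Real.norm_eq_abs] at hy
    have h1 : |y| ≤ c := le_of_lt (lt_of_lt_of_le hy (min_le_left _ _))
    have h2 : |y| ≤ 1 := le_of_lt (lt_of_lt_of_le hy (min_le_right _ _))
    have ha : (0:ℝ) ≤ max y 0 := le_max_right _ _
    have hay : max y 0 ≤ |y| := max_le (le_abs_self y) (abs_nonneg y)
    simp only [max_self, zero_pow (Nat.succ_ne_zero k), zero_pow hk0, smul_zero, mul_zero,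
      sub_zero, smul_eq_mul, Real.norm_eq_abs]
    rw [abs_of_nonneg (pow_nonneg ha _)]
    calc (max y 0) ^ (k+1) ≤ |y| ^ (k+1) := pow_le_pow_left₀ ha hay _
      _ ≤ |y| ^ 2 := pow_le_pow_of_le_one (abs_nonneg y) h2 (by omega)
      _ = |y| * |y| := by ring
      _ ≤ c * |y| := mul_le_mul_of_nonneg_right h1 (abs_nonneg y)
  · have h : (fun y : ℝ => (max y 0) ^ (k+1)) =ᶠ[nhds x] fun y => y ^ (k+1) := by
      filter_upwards [eventually_gt_nhds hx] with y hy
      rw [max_eq_left hy.le]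
    have := (hasDerivAt_pow (k+1) x).congr_of_eventuallyEq h
    simpa [max_eq_left hx.le, Nat.add_sub_cancel] using this

lemma integral_maxpow (k : ℕ) (hk : 1 ≤ k) (c a b : ℝ) :
    ∫ t in a..b, (max (c + t) 0) ^ k
      = ((max (c + b) 0) ^ (k+1) - (max (c + a) 0) ^ (k+1)) / (k+1) := by
  have hcont : Continuous fun t : ℝ => (max (c + t) 0) ^ k :=
    ((continuous_const.add continuous_id).max continuous_const).pow k
  have h : ∀ t ∈ Set.uIcc a b, HasDerivAt (fun y : ℝ => (max (c + y) 0) ^ (k+1))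
      (((k:ℝ)+1) * (max (c + t) 0) ^ k) t := by
    intro t _
    have h1 : HasDerivAt (fun y : ℝ => c + y) 1 t := (hasDerivAt_id t).const_add c
    have := ((hasDerivAt_maxpow k hk (c + t)).comp t h1)
    simpa [Function.comp_def] using this
  have := integral_eq_sub_of_hasDerivAt h ((continuous_const.mul hcont).intervalIntegrable a b)
  have hk1 : ((k:ℝ)+1) ≠ 0 := by positivity
  rw [intervalIntegral.integral_const_mul] at this
  field_simp at this ⊢
  linarith [this]

lemma pascal_sum (n : ℕ) (ψ : ℕ → ℝ) :
    ∑ i ∈ Finset.range (n+2), (-1:ℝ)^i * ((n+1).choose i) * ψ i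
      = (∑ i ∈ Finset.range (n+1), (-1:ℝ)^i * (n.choose i) * ψ i)
        - ∑ i ∈ Finset.range (n+1), (-1:ℝ)^i * (n.choose i) * ψ (i+1) := by
  have hU : ∑ i ∈ Finset.range (n+2), (-1:ℝ)^i * (n.choose i) * ψ i
      = ∑ i ∈ Finset.range (n+1), (-1:ℝ)^i * (n.choose i) * ψ i := by
    rw [Finset.sum_range_succ, Nat.choose_succ_self]
    simp
  have hU' : ∑ i ∈ Finset.range (n+2), (-1:ℝ)^i * (n.choose i) * ψ i
      = (∑ i ∈ Finset.range (n+1), (-1:ℝ)^(i+1) * (n.choose (i+1)) * ψ (i+1)) + ψ 0 := by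
    rw [Finset.sum_range_succ']
    simp
  have hT : ∑ i ∈ Finset.range (n+1), (-1:ℝ)^i * (n.choose (i+1)) * ψ (i+1)
      = ψ 0 - ∑ i ∈ Finset.range (n+1), (-1:ℝ)^i * (n.choose i) * ψ i := by
    have h2 : ∑ i ∈ Finset.range (n+1), (-1:ℝ)^(i+1) * (n.choose (i+1)) * ψ (i+1)
        = - ∑ i ∈ Finset.range (n+1), (-1:ℝ)^i * (n.choose (i+1)) * ψ (i+1) := by
      rw [← Finset.sum_neg_distrib]
      refine Finset.sum_congr rfl (fun i _ => ?_)
      rw [pow_succ]; ring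
    have := hU.symm.trans hU'
    rw [h2] at this
    linarith
  rw [Finset.sum_range_succ']
  have hF : ∀ i ∈ Finset.range (n+1), (-1:ℝ)^(i+1) * ((n+1).choose (i+1)) * ψ (i+1)
      = -((-1:ℝ)^i * (n.choose i) * ψ (i+1)) - (-1:ℝ)^i * (n.choose (i+1)) * ψ (i+1) := by
    intro i _
    rw [Nat.choose_succ_succ, pow_succ]
    push_cast
    ring
  rw [Finset.sum_congr rfl hF, Finset.sum_sub_distrib, Finset.sum_neg_distrib, hT]
  simp
  ring



lemma g_rec (m : ℕ) (r : ℝ) :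
    ∫ t in (r-1)..(r+1), g (m+2) t = 2 * g (m+3) r := by
  set n := m + 2 with hn
  have hcont : ∀ i : ℕ, Continuous fun t : ℝ =>
      (-1:ℝ)^i * (n.choose i) * (max ((n:ℝ) + t - 2*i) 0) ^ (n-1) := by
    intro i
    fun_prop
  -- compute the integral termwise
  have key : ∫ t in (r-1)..(r+1), g n t
      = (1 / (2 ^ (n - 1) * (Nat.factorial (n - 1)))) *
        ∑ i ∈ Finset.range (n + 1),
          (-1 : ℝ) ^ i * (n.choose i) *
            (((max ((n:ℝ) + (r+1) - 2*i) 0) ^ n - (max ((n:ℝ) + (r-1) - 2*i) 0) ^ n) / n) := by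
    simp only [g]
    rw [intervalIntegral.integral_const_mul]
    congr 1
    rw [intervalIntegral.integral_finset_sum (fun i _ => ((hcont i).intervalIntegrable _ _))]
    refine Finset.sum_congr rfl (fun i _ => ?_)
    rw [intervalIntegral.integral_const_mul]
    congr 1
    have := integral_maxpow (n-1) (by omega) ((n:ℝ) - 2*i) (r-1) (r+1)
    have hnn : (n:ℝ) - 2*i + (r-1) = (n:ℝ) + (r-1) - 2*i := by ring
    have hnn' : (n:ℝ) - 2*i + (r+1) = (n:ℝ) + (r+1) - 2*i := by ring
    have hn1 : (n - 1) + 1 = n := by omega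
    have hcast : ((n - 1 : ℕ) : ℝ) + 1 = (n : ℝ) := by
      have : ((n - 1 : ℕ) : ℝ) = (n:ℝ) - 1 := by
        rw [Nat.cast_sub (by omega)]; norm_num
      rw [this]; ring
    calc ∫ t in (r-1)..(r+1), (max ((n:ℝ) + t - 2*i) 0) ^ (n-1)
        = ∫ t in (r-1)..(r+1), (max ((n:ℝ) - 2*i + t) 0) ^ (n-1) := by
          congr 1; ext t; congr 2; ring
      _ = ((max ((n:ℝ) + (r+1) - 2*i) 0) ^ n - (max ((n:ℝ) + (r-1) - 2*i) 0) ^ n) / n := by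
          rw [integral_maxpow (n-1) (by omega), hnn, hnn', hn1, hcast]
  rw [key]
  set ψ : ℕ → ℝ := fun i => (max ((n:ℝ) + 1 + r - 2 * i) 0) ^ n with hψ
  have h1 : ∀ i : ℕ, (max ((n:ℝ) + (r+1) - 2*i) 0) ^ n = ψ i := by
    intro i; simp only [hψ]; congr 2; ring
  have h2 : ∀ i : ℕ, (max ((n:ℝ) + (r-1) - 2*i) 0) ^ n = ψ (i+1) := by
    intro i; simp only [hψ]; congr 2; push_cast; ring
  have hsum : ∑ i ∈ Finset.range (n + 1),
      (-1 : ℝ) ^ i * (n.choose i) *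
        (((max ((n:ℝ) + (r+1) - 2*i) 0) ^ n - (max ((n:ℝ) + (r-1) - 2*i) 0) ^ n) / n)
      = ((∑ i ∈ Finset.range (n+1), (-1:ℝ)^i * (n.choose i) * ψ i)
          - ∑ i ∈ Finset.range (n+1), (-1:ℝ)^i * (n.choose i) * ψ (i+1)) / n := by
    rw [← Finset.sum_sub_distrib, Finset.sum_div]
    refine Finset.sum_congr rfl (fun i _ => ?_)
    rw [h1 i, h2 i]; ring
  rw [hsum, ← pascal_sum n ψ]
  have hSS : (∑ i ∈ Finset.range (m+3+1), (-1:ℝ)^i * (((m+3).choose i : ℕ) : ℝ)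
        * (max (((m+3 : ℕ) : ℝ) + r - 2*i) 0)^(m+3-1))
      = ∑ i ∈ Finset.range (n+2), (-1:ℝ)^i * ((n+1).choose i) * ψ i := by
    refine Finset.sum_congr (by rw [hn]) (fun i _ => ?_)
    simp only [hψ, hn]
    have c1 : m + 2 + 1 = m + 3 := by omega
    have c2 : m + 3 - 1 = m + 2 := by omega
    have c3 : ((m+2 : ℕ) : ℝ) + 1 + r - 2*(i:ℝ) = ((m+3 : ℕ):ℝ) + r - 2*(i:ℝ) := by
      push_cast; ring
    rw [c1, c2, c3]
  simp only [g]
  rw [hSS]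
  set S := ∑ i ∈ Finset.range (n+2), (-1:ℝ)^i * ((n+1).choose i) * ψ i with hS
  have e1 : n - 1 = m + 1 := by omega
  have e2 : m + 3 - 1 = m + 2 := by omega
  rw [e1, e2]
  have hfac : (Nat.factorial (m+2) : ℝ) = ((n:ℝ)) * (Nat.factorial (m+1)) := by
    rw [hn]; push_cast [Nat.factorial_succ]; ring
  rw [hfac]
  have hpos1 : (0:ℝ) < Nat.factorial (m+1) := by positivity
  have hnpos : (0:ℝ) < (n:ℝ) := by rw [hn]; positivity
  have hpow : (2:ℝ) ^ (m+2) = 2 * 2 ^ (m+1) := by ring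
  rw [hpow]
  field_simp

lemma g_cont (n : ℕ) : Continuous (g n) := by
  unfold g; fun_prop

lemma g_two (x : ℝ) : g 2 x = (max (2+x) 0 - 2 * max x 0 + max (x-2) 0)/2 := by
  simp only [g, Finset.sum_range_succ, Finset.sum_range_zero]
  norm_num
  have e1 : (2:ℝ) + x - 4 = x - 2 := by ring
  rw [e1]
  ring

lemma g_two_abs (x : ℝ) : g 2 x = (max (2 - |x|) 0)/2 := by
  rw [g_two]
  rcases le_total x 0 with h|h
  · rw [abs_of_nonpos h, max_eq_right h, max_eq_right (show x - 2 ≤ 0 by linarith)]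
    rcases le_total (2+x) 0 with h2|h2
    · rw [max_eq_right h2, max_eq_right (show 2-(-x) ≤ 0 by linarith)]; ring
    · rw [max_eq_left h2, max_eq_left (show (0:ℝ) ≤ 2-(-x) by linarith)]; ring
  · rw [abs_of_nonneg h, max_eq_left h, max_eq_left (show (0:ℝ) ≤ 2+x by linarith)]
    rcases le_total (x-2) 0 with h2|h2
    · rw [max_eq_right h2, max_eq_left (show (0:ℝ) ≤ 2-x by linarith)]; ring
    · rw [max_eq_left h2, max_eq_right (show 2-x ≤ 0 by linarith)]; ring

lemma g_rec' {n : ℕ} (hn : 2 ≤ n) (r : ℝ) :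
    g (n+1) r = (∫ t in (r-1)..(r+1), g n t) / 2 := by
  obtain ⟨m, rfl⟩ : ∃ m, n = m + 2 := ⟨n - 2, by omega⟩
  rw [g_rec m r]; ring

lemma g_props {n : ℕ} (hn : 2 ≤ n) :
    (∀ x, 0 ≤ g n x) ∧ (∀ x : ℝ, (n:ℝ) ≤ |x| → g n x = 0) ∧ (∀ x, g n (-x) = g n x) := by
  induction n, hn using Nat.le_induction with
  | base =>
    refine ⟨fun x => ?_, fun x hx => ?_, fun x => ?_⟩
    · rw [g_two_abs]; positivity
    · rw [g_two_abs, max_eq_right (by norm_num at hx ⊢; linarith)]; norm_num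
    · rw [g_two_abs, g_two_abs, abs_neg]
  | succ n hn ih =>
    obtain ⟨ihpos, ihsupp, iheven⟩ := ih
    refine ⟨fun x => ?_, fun x hx => ?_, fun x => ?_⟩
    · rw [g_rec' hn]
      have : 0 ≤ ∫ t in (x-1)..(x+1), g n t :=
        intervalIntegral.integral_nonneg (by linarith) (fun t _ => ihpos t)
      linarith
    · rw [g_rec' hn]
      have : ∫ t in (x-1)..(x+1), g n t = 0 := by
        rw [intervalIntegral.integral_congr (g := fun _ => (0:ℝ)) ?_, intervalIntegral.integral_zero]
        intro t ht
        rw [Set.uIcc_of_le (by linarith : x - 1 ≤ x + 1)] at ht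
        rcases le_abs.mp hx with h|h
        · exact ihsupp t (le_abs.mpr (Or.inl (by push_cast at h ⊢; linarith [ht.1])))
        · exact ihsupp t (le_abs.mpr (Or.inr (by push_cast at h ⊢; linarith [ht.2])))
      rw [this]; norm_num
    · rw [g_rec' hn, g_rec' hn]
      congr 1
      have : ∀ a b : ℝ, ∫ t in a..b, g n (-t) = ∫ t in (-b)..(-a), g n t :=
        fun a b => intervalIntegral.integral_comp_neg (fun t => g n t)
      calc ∫ t in (-x-1)..(-x+1), g n t
          = ∫ t in (-(x+1))..(-(x-1)), g n t := by congr 1 <;> ring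
        _ = ∫ t in (x-1)..(x+1), g n (-t) := (this _ _).symm
        _ = ∫ t in (x-1)..(x+1), g n t := by
            apply intervalIntegral.integral_congr
            intro t _; exact iheven t

noncomputable def χ : ℝ → ℝ := Set.indicator (Set.Ico (-1 : ℝ) 1) (fun _ => (1:ℝ))

lemma χ_meas : AEStronglyMeasurable χ (volume : Measure ℝ) :=
  ((measurable_const (a := (1:ℝ))).indicator measurableSet_Ico).aestronglyMeasurable

lemma χ_int : Integrable χ (volume : Measure ℝ) := by
  rw [χ, integrable_indicator_iff measurableSet_Ico]
  exact integrableOn_const measure_Ico_lt_top.ne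

lemma χ_nonneg (x : ℝ) : 0 ≤ χ x := by
  unfold χ; by_cases h : x ∈ Set.Ico (-1:ℝ) 1 <;> simp [h]

lemma χ_bdd (x : ℝ) : ‖χ x‖ ≤ 1 := by
  unfold χ; by_cases h : x ∈ Set.Ico (-1:ℝ) 1 <;> simp [h]

lemma χ_supp : HasCompactSupport χ := by
  apply HasCompactSupport.intro (isCompact_Icc (a := (-1:ℝ)) (b := 1))
  intro x hx
  apply Set.indicator_of_notMem
  intro hx'
  exact hx ⟨hx'.1, hx'.2.le⟩

lemma g_supp {n : ℕ} (hn : 2 ≤ n) : HasCompactSupport (g n) := by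
  apply HasCompactSupport.intro (isCompact_Icc (a := -(n:ℝ)) (b := (n:ℝ)))
  intro x hx
  refine (g_props hn).2.1 x ?_
  rw [Set.mem_Icc, not_and_or] at hx
  rcases hx with h | h
  · push_neg at h; rw [abs_of_nonpos (by linarith)]; linarith
  · push_neg at h; rw [abs_of_nonneg (by linarith)]; linarith

lemma g_int {n : ℕ} (hn : 2 ≤ n) : Integrable (g n) (volume : Measure ℝ) :=
  (g_cont n).integrable_of_hasCompactSupport (g_supp hn)

-- convolution with χ is the sliding-window integral
lemma conv_chi (f : ℝ → ℝ) (hf : Integrable f (volume : Measure ℝ)) (x : ℝ) :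
    (f ⋆[ContinuousLinearMap.mul ℝ ℝ] χ) x = ∫ t in (x-1)..(x+1), f t := by
  have h : (fun t => (ContinuousLinearMap.mul ℝ ℝ) (f t) (χ (x - t)))
      = Set.indicator (Set.Ioc (x-1) (x+1)) f := by
    funext t
    simp only [ContinuousLinearMap.mul_apply']
    by_cases h : t ∈ Set.Ioc (x-1) (x+1)
    · have : x - t ∈ Set.Ico (-1:ℝ) 1 := ⟨by linarith [h.2], by linarith [h.1]⟩
      rw [Set.indicator_of_mem h, χ, Set.indicator_of_mem this, mul_one]
    · have : x - t ∉ Set.Ico (-1:ℝ) 1 := by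
        intro hc
        exact h ⟨by linarith [hc.2], by linarith [hc.1]⟩
      rw [Set.indicator_of_notMem h, χ, Set.indicator_of_notMem this, mul_zero]
  rw [convolution_def, h, MeasureTheory.integral_indicator measurableSet_Ioc,
    intervalIntegral.integral_of_le (by linarith : x - 1 ≤ x + 1)]

lemma g_conv_chi {n : ℕ} (hn : 2 ≤ n) :
    (g n ⋆[ContinuousLinearMap.mul ℝ ℝ] χ) = (2:ℝ) • g (n+1) := by
  funext x
  obtain ⟨m, rfl⟩ : ∃ m, n = m + 2 := ⟨n - 2, by omega⟩
  rw [conv_chi _ (g_int hn) x, g_rec m x]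
  simp

lemma chi_conv_chi : (χ ⋆[ContinuousLinearMap.mul ℝ ℝ] χ) = (2:ℝ) • g 2 := by
  funext x
  rw [conv_chi χ χ_int x, Pi.smul_apply, smul_eq_mul, g_two_abs,
    intervalIntegral.integral_of_le (by linarith : x - 1 ≤ x + 1)]
  rw [χ, MeasureTheory.integral_indicator_const _ measurableSet_Ico, measureReal_def,
    Measure.restrict_apply measurableSet_Ico,
    measure_congr (μ := (volume : Measure ℝ)) (MeasureTheory.ae_eq_set_inter (Ico_ae_eq_Ioc (a := (-1:ℝ)) (b := 1)) (ae_eq_refl (Ioc (x-1) (x+1)))),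
    Set.Ioc_inter_Ioc, Real.volume_Ioc]
  rcases le_total x 0 with h|h
  · rw [min_eq_right (by linarith : x + 1 ≤ 1), max_eq_left (by linarith : x - 1 ≤ -1),
      abs_of_nonpos h]
    rcases le_total (x+1-(-1)) 0 with h2|h2
    · rw [ENNReal.ofReal_of_nonpos h2, max_eq_right (by linarith : 2 - -x ≤ 0)]
      simp
    · rw [ENNReal.toReal_ofReal h2, max_eq_left (by linarith : (0:ℝ) ≤ 2 - -x)]
      simp; ring
  · rw [min_eq_left (by linarith : (1:ℝ) ≤ x + 1), max_eq_right (by linarith : (-1:ℝ) ≤ x - 1),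
      abs_of_nonneg h]
    rcases le_total (1-(x-1)) 0 with h2|h2
    · rw [ENNReal.ofReal_of_nonpos h2, max_eq_right (by linarith : 2 - x ≤ 0)]
      simp
    · rw [ENNReal.toReal_ofReal h2, max_eq_left (by linarith : (0:ℝ) ≤ 2 - x)]
      simp; ring

lemma convAt_bdd {f h : ℝ → ℝ} (hf : Integrable f (volume : Measure ℝ)) (hh : Continuous h)
    (C : ℝ) (hb : ∀ x, ‖h x‖ ≤ C) (x₀ : ℝ) :
    ConvolutionExistsAt f h x₀ (ContinuousLinearMap.mul ℝ ℝ) volume := by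
  unfold ConvolutionExistsAt
  simp only [ContinuousLinearMap.mul_apply']
  have : Integrable (fun t => h (x₀ - t) * f t) volume :=
    hf.bdd_mul ((hh.comp (continuous_const.sub continuous_id)).aestronglyMeasurable)
      (Filter.Eventually.of_forall fun x => hb _)
  simpa [mul_comm] using this

lemma assoc1 {f : ℝ → ℝ} (hfc : Continuous f) (hfs : HasCompactSupport f) :
    ((f ⋆[ContinuousLinearMap.mul ℝ ℝ] χ) ⋆[ContinuousLinearMap.mul ℝ ℝ] χ)
      = f ⋆[ContinuousLinearMap.mul ℝ ℝ] (χ ⋆[ContinuousLinearMap.mul ℝ ℝ] χ) := by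
  funext x₀
  have hfi : Integrable f volume := hfc.integrable_of_hasCompactSupport hfs
  apply convolution_assoc (ContinuousLinearMap.mul ℝ ℝ) (ContinuousLinearMap.mul ℝ ℝ)
    (ContinuousLinearMap.mul ℝ ℝ) (ContinuousLinearMap.mul ℝ ℝ)
    (fun a b c => mul_assoc a b c)
    hfc.aestronglyMeasurable χ_meas χ_meas
    (hfi.ae_convolution_exists (L := ContinuousLinearMap.mul ℝ ℝ) χ_int)
    ((χ_int.norm).ae_convolution_exists (L := ContinuousLinearMap.mul ℝ ℝ) χ_int.norm)
  have hχn : (fun x => ‖χ x‖) = χ := funext fun x => Real.norm_of_nonneg (χ_nonneg x)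
  rw [hχn, chi_conv_chi]
  obtain ⟨C, hC⟩ := (g_cont 2).bounded_above_of_compact_support (g_supp le_rfl)
  refine convAt_bdd hfi.norm (((g_cont 2).const_smul (2:ℝ))) (2*C) (fun x => ?_) x₀
  calc ‖((2:ℝ) • g 2) x‖ = 2 * ‖g 2 x‖ := by
        simp [abs_of_nonneg, norm_smul]
    _ ≤ 2 * C := by nlinarith [hC x, norm_nonneg (g 2 x)]

lemma assoc2 {f k : ℝ → ℝ} (hfc : Continuous f) (hfs : HasCompactSupport f)
    (hkc : Continuous k) (hks : HasCompactSupport k) (hknn : ∀ x, 0 ≤ k x) :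
    ((f ⋆[ContinuousLinearMap.mul ℝ ℝ] k) ⋆[ContinuousLinearMap.mul ℝ ℝ] χ)
      = f ⋆[ContinuousLinearMap.mul ℝ ℝ] (k ⋆[ContinuousLinearMap.mul ℝ ℝ] χ) := by
  funext x₀
  have hfi : Integrable f volume := hfc.integrable_of_hasCompactSupport hfs
  have hki : Integrable k volume := hkc.integrable_of_hasCompactSupport hks
  apply convolution_assoc (ContinuousLinearMap.mul ℝ ℝ) (ContinuousLinearMap.mul ℝ ℝ)
    (ContinuousLinearMap.mul ℝ ℝ) (ContinuousLinearMap.mul ℝ ℝ)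
    (fun a b c => mul_assoc a b c)
    hfc.aestronglyMeasurable hkc.aestronglyMeasurable χ_meas
    (hfi.ae_convolution_exists (L := ContinuousLinearMap.mul ℝ ℝ) hki)
    ((hki.norm).ae_convolution_exists (L := ContinuousLinearMap.mul ℝ ℝ) χ_int.norm)
  have hχn : (fun x => ‖χ x‖) = χ := funext fun x => Real.norm_of_nonneg (χ_nonneg x)
  have hkn : (fun x => ‖k x‖) = k := funext fun x => Real.norm_of_nonneg (hknn x)
  rw [hχn, hkn]
  have hconvc : Continuous (k ⋆[ContinuousLinearMap.mul ℝ ℝ] χ) :=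
    HasCompactSupport.continuous_convolution_left _ hks hkc χ_int.locallyIntegrable
  have hconvs : HasCompactSupport (k ⋆[ContinuousLinearMap.mul ℝ ℝ] χ) :=
    HasCompactSupport.convolution _ hks χ_supp
  obtain ⟨C, hC⟩ := hconvc.bounded_above_of_compact_support hconvs
  exact convAt_bdd hfi.norm hconvc C hC x₀

lemma g_conv_g {m n : ℕ} (hm : 2 ≤ m) (hn : 2 ≤ n) :
    (g m ⋆[ContinuousLinearMap.mul ℝ ℝ] g n) = (2:ℝ) • g (m+n) := by
  induction n, hn using Nat.le_induction with
  | base =>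
    have e : g 2 = (2:ℝ)⁻¹ • (χ ⋆[ContinuousLinearMap.mul ℝ ℝ] χ) := by
      rw [chi_conv_chi, smul_smul]; norm_num
    calc g m ⋆[ContinuousLinearMap.mul ℝ ℝ] g 2
        = g m ⋆[ContinuousLinearMap.mul ℝ ℝ]
            ((2:ℝ)⁻¹ • (χ ⋆[ContinuousLinearMap.mul ℝ ℝ] χ)) := by rw [← e]
      _ = (2:ℝ)⁻¹ • (g m ⋆[ContinuousLinearMap.mul ℝ ℝ]
            (χ ⋆[ContinuousLinearMap.mul ℝ ℝ] χ)) := convolution_smul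
      _ = (2:ℝ)⁻¹ • ((g m ⋆[ContinuousLinearMap.mul ℝ ℝ] χ)
            ⋆[ContinuousLinearMap.mul ℝ ℝ] χ) := by rw [assoc1 (g_cont m) (g_supp hm)]
      _ = (2:ℝ)⁻¹ • (((2:ℝ) • g (m+1)) ⋆[ContinuousLinearMap.mul ℝ ℝ] χ) := by
            rw [g_conv_chi hm]
      _ = (2:ℝ)⁻¹ • ((2:ℝ) • (g (m+1) ⋆[ContinuousLinearMap.mul ℝ ℝ] χ)) := by
            rw [smul_convolution]
      _ = (2:ℝ)⁻¹ • ((2:ℝ) • ((2:ℝ) • g (m+2))) := by rw [g_conv_chi (by omega)]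
      _ = (2:ℝ) • g (m+2) := by
            funext x; simp [smul_smul]; ring
  | succ n hn ih =>
    have e : g (n+1) = (2:ℝ)⁻¹ • (g n ⋆[ContinuousLinearMap.mul ℝ ℝ] χ) := by
      rw [g_conv_chi hn, smul_smul]; norm_num
    calc g m ⋆[ContinuousLinearMap.mul ℝ ℝ] g (n+1)
        = g m ⋆[ContinuousLinearMap.mul ℝ ℝ]
            ((2:ℝ)⁻¹ • (g n ⋆[ContinuousLinearMap.mul ℝ ℝ] χ)) := by rw [← e]
      _ = (2:ℝ)⁻¹ • (g m ⋆[ContinuousLinearMap.mul ℝ ℝ]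
            (g n ⋆[ContinuousLinearMap.mul ℝ ℝ] χ)) := convolution_smul
      _ = (2:ℝ)⁻¹ • ((g m ⋆[ContinuousLinearMap.mul ℝ ℝ] g n)
            ⋆[ContinuousLinearMap.mul ℝ ℝ] χ) := by
            rw [assoc2 (g_cont m) (g_supp hm) (g_cont n) (g_supp hn) (g_props hn).1]
      _ = (2:ℝ)⁻¹ • (((2:ℝ) • g (m+n)) ⋆[ContinuousLinearMap.mul ℝ ℝ] χ) := by rw [ih]
      _ = (2:ℝ)⁻¹ • ((2:ℝ) • ((2:ℝ) • g (m+n+1))) := by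
            rw [smul_convolution, g_conv_chi (by omega)]
      _ = (2:ℝ) • g (m+(n+1)) := by
            rw [show m+(n+1) = m+n+1 by omega]
            funext x; simp [smul_smul]; ring

lemma J_eq_g {n : ℕ} (hn : 2 ≤ n) (r : ℝ) : J n r = g n r := by
  have hn1 : n - 1 ≠ 0 := by omega
  unfold J g
  congr 1
  set K := ⌊((n : ℝ) + r) / 2⌋ with hK
  rcases lt_or_ge K 0 with hKneg | hKpos
  · -- Icc empty; g sum is zero since n + r < 0
    rw [Finset.Icc_eq_empty_of_lt hKneg, Finset.sum_empty]
    have hnr : (n:ℝ) + r < 0 := by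
      have := Int.lt_floor_add_one (((n : ℝ) + r) / 2)
      have hK1 : (K:ℝ) + 1 ≤ 0 := by
        have : K + 1 ≤ 0 := by omega
        exact_mod_cast this
      nlinarith [this]
    symm
    apply Finset.sum_eq_zero
    intro i _
    have : max ((n:ℝ) + r - 2 * i) 0 = 0 := by
      apply max_eq_right
      have : (0:ℝ) ≤ 2 * i := by positivity
      linarith
    rw [this, zero_pow hn1, mul_zero]
  · -- common refinement over range N
    set N := max (n + 1) (K.toNat + 1) with hN
    have hKle : ∀ i : ℕ, (i:ℤ) ≤ K → (0:ℝ) ≤ (n:ℝ) + r - 2 * i := by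
      intro i hi
      have h1 : ((i:ℝ)) ≤ (K:ℝ) := by exact_mod_cast hi
      have h2 : (K:ℝ) ≤ ((n:ℝ) + r)/2 := Int.floor_le _
      linarith
    have hKgt : ∀ i : ℕ, K < (i:ℤ) → (n:ℝ) + r - 2 * i < 0 := by
      intro i hi
      have h1 : (K:ℝ) + 1 ≤ (i:ℝ) := by exact_mod_cast hi
      have h2 : ((n:ℝ) + r)/2 < (K:ℝ) + 1 := Int.lt_floor_add_one _
      linarith
    -- J sum equals max-form sum over range (K.toNat + 1)
    have hJ : ∑ i ∈ Finset.Icc (0 : ℤ) K,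
        (-1 : ℝ) ^ i * (n.choose i.toNat) * ((n : ℝ) + r - 2 * (i : ℝ)) ^ (n - 1)
        = ∑ i ∈ Finset.range (K.toNat + 1),
            (-1 : ℝ) ^ i * (n.choose i) * (max ((n : ℝ) + r - 2 * i) 0) ^ (n - 1) := by
      refine Finset.sum_nbij' (fun a => a.toNat) (fun b => (b : ℤ)) ?_ ?_ ?_ ?_ ?_
      · intro a ha
        simp only [Finset.mem_Icc] at ha
        simp only [Finset.mem_range]
        omega
      · intro b hb
        simp only [Finset.mem_range] at hb
        simp only [Finset.mem_Icc]
        omega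
      · intro a ha; simp only [Finset.mem_Icc] at ha; omega
      · intro b _; exact Int.toNat_natCast b
      · intro a ha
        simp only [Finset.mem_Icc] at ha
        have h0 : ((a.toNat : ℤ)) = a := Int.toNat_of_nonneg ha.1
        have hcast : ((a.toNat : ℝ)) = (a : ℝ) := by exact_mod_cast h0
        have h1 : (max ((n:ℝ) + r - 2 * ((a.toNat : ℕ):ℝ)) 0)
            = (n:ℝ) + r - 2 * ((a.toNat : ℕ):ℝ) :=
          max_eq_left (hKle a.toNat (by omega))
        rw [h1, hcast]
        have h2 : (-1 : ℝ) ^ a = (-1:ℝ) ^ (a.toNat) := by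
          conv_lhs => rw [← h0]
          rw [zpow_natCast]
        rw [h2]
    rw [hJ]
    -- both sides extend to range N
    have e1 : ∑ i ∈ Finset.range (K.toNat + 1),
        (-1 : ℝ) ^ i * (n.choose i) * (max ((n : ℝ) + r - 2 * i) 0) ^ (n - 1)
        = ∑ i ∈ Finset.range N,
            (-1 : ℝ) ^ i * (n.choose i) * (max ((n : ℝ) + r - 2 * i) 0) ^ (n - 1) := by
      apply Finset.sum_subset (Finset.range_subset_range.mpr (le_max_right _ _))
      intro i hi hni
      rw [Finset.mem_range] at hi hni
      have : K < (i : ℤ) := by omega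
      rw [max_eq_right (le_of_lt (hKgt i this)), zero_pow hn1, mul_zero]
    have e2 : ∑ i ∈ Finset.range (n + 1),
        (-1 : ℝ) ^ i * (n.choose i) * (max ((n : ℝ) + r - 2 * i) 0) ^ (n - 1)
        = ∑ i ∈ Finset.range N,
            (-1 : ℝ) ^ i * (n.choose i) * (max ((n : ℝ) + r - 2 * i) 0) ^ (n - 1) := by
      apply Finset.sum_subset (Finset.range_subset_range.mpr (le_max_left _ _))
      intro i hi hni
      rw [Finset.mem_range] at hi hni
      rw [Nat.choose_eq_zero_of_lt (by omega)]
      norm_num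
    rw [e1, e2]

lemma conv_at_zero {m n : ℕ} (hm : 2 ≤ m) (hn : 2 ≤ n) :
    2 * g (m + n) 0 = ∫ t, g m t * g n t := by
  have hc := congrFun (g_conv_g hm hn) 0
  rw [convolution_def] at hc
  simp only [ContinuousLinearMap.mul_apply', Pi.smul_apply, smul_eq_mul] at hc
  rw [← hc]
  apply MeasureTheory.integral_congr_ae
  filter_upwards with t
  rw [zero_sub, (g_props hn).2.2 t]

lemma prod_int {m n : ℕ} (hm : 2 ≤ m) (hn : 2 ≤ n) :
    Integrable (fun t => g m t * g n t) (volume : Measure ℝ) := by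
  apply Continuous.integrable_of_hasCompactSupport ((g_cont m).mul (g_cont n))
  exact (g_supp hm).mul_right

lemma g_convex_big {p : ℕ} (hp : 2 ≤ p) :
    2 * g (2*p+2) 0 ≤ g (2*p+4) 0 + g (2*p) 0 := by
  have hp2 : 2 ≤ p + 2 := by omega
  have h1 : 2 * g (2*p+2) 0 = ∫ t, g p t * g (p+2) t := by
    rw [show 2*p+2 = p + (p+2) by omega]; exact conv_at_zero hp hp2
  have h2 : 2 * g (2*p) 0 = ∫ t, g p t * g p t := by
    rw [show 2*p = p + p by omega]; exact conv_at_zero hp hp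
  have h3 : 2 * g (2*p+4) 0 = ∫ t, g (p+2) t * g (p+2) t := by
    rw [show 2*p+4 = (p+2) + (p+2) by omega]; exact conv_at_zero hp2 hp2
  have key : (∫ t, 2 * (g p t * g (p+2) t))
      ≤ ∫ t, (g p t * g p t + g (p+2) t * g (p+2) t) := by
    apply integral_mono ((prod_int hp hp2).const_mul 2)
      ((prod_int hp hp).add (prod_int hp2 hp2))
    intro t
    simp only [Pi.add_apply]
    nlinarith [sq_nonneg (g p t - g (p+2) t)]
  rw [MeasureTheory.integral_const_mul, ← h1,
    MeasureTheory.integral_add (prod_int hp hp) (prod_int hp2 hp2), ← h2, ← h3] at key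
  linarith

lemma g_convex {p : ℕ} (hp : 1 ≤ p) :
    2 * g (2*p+2) 0 ≤ g (2*p+4) 0 + g (2*p) 0 := by
  rcases eq_or_lt_of_le hp with h | h
  · -- p = 1 : numeric
    subst h
    norm_num [g, Finset.sum_range_succ, Nat.factorial, Nat.choose]
  · exact g_convex_big (by omega)

theorem f_odd_convex (p : ℕ) (hp : 1 ≤ p) :
    2 * f (2 * p + 1) ≤ f (2 * p + 3) + f (2 * p - 1) := by
  have e1 : f (2*p+1) = J (2*p+2) 0 := by
    rw [f, if_neg (by simp [parity_simps])]
  have e2 : f (2*p+3) = J (2*p+4) 0 := by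
    rw [f, if_neg (by simp [parity_simps])]
  have e3 : f (2*p-1) = J (2*p) 0 := by
    rw [f, if_neg (by rw [Nat.even_sub (by omega)]; simp), show 2*p-1+1 = 2*p by omega]
  rw [e1, e2, e3, J_eq_g (by omega), J_eq_g (by omega), J_eq_g (by omega)]
  exact g_convex hp
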